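/- Let v₁, …, v₄ ∈ ℝ³ be affinely independent with det B_K > 0, let K = F_K(K̂), and define the four face parametrizations φ₁^K(s,t) = F_K(s,t,0), φ₂^K(s,t) = F_K(s,0,t), φ₃^K(s,t) = F_K(0,s,t), φ₄^K(s,t) = F_K(s,t,1−s−t) on the reference triangle K̂₂. Then for every function ψ continuous on ∂K, ∫_{∂K} ψ dμH² = Σ_{ℓ=1}^{4} 2|e_ℓ^K| ∫_{K̂₂} ψ(φ_ℓ^K(s,t)) ds dt, where |e_ℓ^K| is the area (two-dimensional Hausdorff measure) of the ℓ-th face and the inner integrals are with respect to Lebesgue measure on ℝ². -/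

import Mathlib

/-!
`F_K` is an affine homeomorphism, so `∂K` is the image of `∂K̂`, which is the union of the four
faces of `K̂`; hence `∂K = ⋃ ℓ, e_ℓ^K` with `e_ℓ^K = φ_ℓ^K(K̂₂)`. Distinct faces of a
nondegenerate tetrahedron meet in a segment, which is `μH²`-null, so the integral splits over
the faces. On each face, `μH²` pulled back along the injective affine map `φ_ℓ^K` is a Haar
measure on `ℝ²`, i.e. `c_ℓ · Lebesgue`; evaluating on `K̂₂`, whose area is `1/2`, gives
`c_ℓ = 2|e_ℓ^K|`.
-/

open Matrix MeasureTheory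

/-- `B_K`: the 3×3 matrix whose columns are `v₂ − v₁`, `v₃ − v₁`, `v₄ − v₁`. -/
noncomputable def Bmat (v : Fin 4 → EuclideanSpace ℝ (Fin 3)) : Matrix (Fin 3) (Fin 3) ℝ :=
  Matrix.of fun i j => v j.succ i - v 0 i

/-- `F_K`: the affine map `x̂ ↦ B_K x̂ + v₁`. -/
noncomputable def FK (v : Fin 4 → EuclideanSpace ℝ (Fin 3))
    (x : EuclideanSpace ℝ (Fin 3)) : EuclideanSpace ℝ (Fin 3) :=
  Matrix.toEuclideanLin (Bmat v) x + v 0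

/-- The reference tetrahedron `K̂ = {(x,y,z) : x, y, z ≥ 0, x + y + z ≤ 1}`. -/
def refTet : Set (EuclideanSpace ℝ (Fin 3)) :=
  {x | 0 ≤ x 0 ∧ 0 ≤ x 1 ∧ 0 ≤ x 2 ∧ x 0 + x 1 + x 2 ≤ 1}

/-- The reference triangle `K̂₂ = {(s,t) : s, t ≥ 0, s + t ≤ 1}`. -/
def refTri : Set (Fin 2 → ℝ) := {p | 0 ≤ p 0 ∧ 0 ≤ p 1 ∧ p 0 + p 1 ≤ 1}

/-- The vertex triples of the four faces of the tetrahedron, in the order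
`(v₁,v₂,v₃), (v₁,v₂,v₄), (v₁,v₃,v₄), (v₄,v₂,v₃)`. -/
def faceVerts : Fin 4 → Fin 3 → Fin 4 :=
  ![![0, 1, 2], ![0, 1, 3], ![0, 2, 3], ![3, 1, 2]]

/-- The `ℓ`-th face of the tetrahedron with vertices `v`. -/
noncomputable def face (v : Fin 4 → EuclideanSpace ℝ (Fin 3)) (ℓ : Fin 4) :
    Set (EuclideanSpace ℝ (Fin 3)) :=
  convexHull ℝ {v (faceVerts ℓ 0), v (faceVerts ℓ 1), v (faceVerts ℓ 2)}

/-- The four face parametrizations `φ₁^K(s,t) = F_K(s,t,0)`, `φ₂^K(s,t) = F_K(s,0,t)`,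
`φ₃^K(s,t) = F_K(0,s,t)`, `φ₄^K(s,t) = F_K(s,t,1−s−t)`. -/
noncomputable def faceParam (v : Fin 4 → EuclideanSpace ℝ (Fin 3)) :
    Fin 4 → (Fin 2 → ℝ) → EuclideanSpace ℝ (Fin 3) :=
  ![fun p => FK v (WithLp.toLp 2 ![p 0, p 1, 0]),
    fun p => FK v (WithLp.toLp 2 ![p 0, 0, p 1]),
    fun p => FK v (WithLp.toLp 2 ![0, p 0, p 1]),
    fun p => FK v (WithLp.toLp 2 ![p 0, p 1, 1 - p 0 - p 1])]

open Set Function Module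
open scoped ENNReal NNReal Topology

theorem interior_setOf_nonneg {E : Type*} [TopologicalSpace E] [AddCommGroup E] [Module ℝ E]
    [ContinuousAdd E] [ContinuousSMul ℝ E] {f : E → ℝ} (hf : Continuous f) {u : E}
    (hu : ∀ x (t : ℝ), f (x + t • u) = f x + t) :
    interior {x | 0 ≤ f x} = {x | 0 < f x} := by
  refine Subset.antisymm (fun x hx => ?_)
    ((isOpen_lt continuous_const hf).subset_interior_iff.2 fun x hx => show 0 ≤ f x from hx.le)
  have hline : Filter.Tendsto (fun t : ℝ => x + t • u) (𝓝[<] 0) (𝓝 x) := by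
    simpa using ((by fun_prop : Continuous fun t : ℝ => x + t • u).tendsto 0).mono_left
      nhdsWithin_le_nhds
  obtain ⟨t, ht, ht0⟩ :=
    ((hline.eventually (mem_interior_iff_mem_nhds.1 hx)).and self_mem_nhdsWithin).exists
  have : 0 ≤ f x + t := hu x t ▸ ht
  show 0 < f x
  linarith [show t < 0 from ht0]

theorem AffineIndependent.convexHull_image_inter {ι E : Type*} [AddCommGroup E] [Module ℝ E]
    [DecidableEq ι] {p : ι → E} (hp : AffineIndependent ℝ p) (I J : Finset ι) :
    convexHull ℝ (p '' ↑(I ∩ J)) = convexHull ℝ (p '' I) ∩ convexHull ℝ (p '' J) := by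
  classical
  have hs : AffineIndependent ℝ ((↑) : ((I ∪ J).image p : Set E) → E) :=
    hp.range.mono (by simp)
  simpa [Finset.image_inter _ _ hp.injective, image_inter hp.injective] using
    hs.convexHull_inter (Finset.image_subset_image Finset.subset_union_left)
      (Finset.image_subset_image Finset.subset_union_right)

theorem hausdorffMeasure_segment {E : Type*} [NormedAddCommGroup E] [NormedSpace ℝ E]
    [FiniteDimensional ℝ E] [MeasurableSpace E] [BorelSpace E] (x y : E) {d : ℝ} (hd : 1 < d) :
    μH[d] (segment ℝ x y) = 0 := by
  lift d to ℝ≥0 using by linarith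
  apply hausdorffMeasure_of_dimH_lt
  rcases eq_or_ne x y with rfl | hxy
  · rw [segment_same, dimH_singleton]
    exact_mod_cast zero_lt_one.trans hd
  · rw [Real.dimH_segment hxy]
    exact_mod_cast hd

theorem MeasurableEmbedding.restrict_image_eq_smul_map {α β : Type*} [MeasurableSpace α]
    [MeasurableSpace β] {f : α → β} (hf : MeasurableEmbedding f) {μ : Measure α}
    {ν : Measure β} {c : ℝ≥0∞} (h : ∀ s, ν (f '' s) = c * μ s) (s : Set α) :
    ν.restrict (f '' s) = c • (μ.restrict s).map f := by
  ext t ht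
  rw [Measure.restrict_apply ht, ← image_preimage_inter, h, Measure.smul_apply, hf.map_apply,
    Measure.restrict_apply (hf.measurable ht), smul_eq_mul]

section AffineImage

variable {E F : Type*} [NormedAddCommGroup E] [NormedSpace ℝ E] [FiniteDimensional ℝ E]
  [MeasurableSpace E] [BorelSpace E] [NormedAddCommGroup F] [NormedSpace ℝ F]
  [MeasurableSpace F] [BorelSpace F]

theorem AffineMap.measurableEmbedding_of_injective (φ : E →ᵃ[ℝ] F) (hφ : Injective φ) :
    MeasurableEmbedding φ := by
  rw [show ⇑φ = (· + φ 0) ∘ φ.linear from φ.decomp]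
  exact (Homeomorph.addRight (φ 0)).measurableEmbedding.comp
    (LinearMap.isClosedEmbedding_of_injective
      (LinearMap.ker_eq_bot.2 (φ.linear_injective_iff.2 hφ))).measurableEmbedding

variable (μ : Measure E) [μ.IsAddHaarMeasure]

/-- `μH[dim E]` on the range of `L` is a Haar measure, so its pullback is a multiple of `μ`. -/
theorem LinearMap.exists_hausdorffMeasure_image_eq_mul (L : E →ₗ[ℝ] F) (hL : Injective L) :
    ∃ c : ℝ≥0, ∀ s, μH[finrank ℝ E] (L '' s) = c * μ s := by
  let M : E ≃L[ℝ] LinearMap.range L := (LinearEquiv.ofInjective L hL).toContinuousLinearEquiv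
  have hrank : finrank ℝ (LinearMap.range L) = finrank ℝ E :=
    (LinearEquiv.ofInjective L hL).finrank_eq.symm
  have : (μH[finrank ℝ E] : Measure (LinearMap.range L)).IsAddHaarMeasure :=
    hrank ▸ inferInstance
  refine ⟨Measure.addHaarScalarFactor μH[finrank ℝ E] (μ.map M), fun s => ?_⟩
  have hLM : L '' s = (↑) '' (M '' s) := by rw [image_image]; rfl
  have hM : MeasurableEmbedding M := M.toHomeomorph.measurableEmbedding
  have hHaar := congrArg (· (M '' s))
    (Measure.isAddLeftInvariant_eq_smul μH[finrank ℝ E] (μ.map M))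
  rw [hLM, isometry_subtype_coe.hausdorffMeasure_image (Or.inl (Nat.cast_nonneg _)), hHaar,
    Measure.coe_nnreal_smul_apply, hM.map_apply, M.injective.preimage_image]

theorem AffineMap.exists_hausdorffMeasure_image_eq_mul (φ : E →ᵃ[ℝ] F) (hφ : Injective φ) :
    ∃ c : ℝ≥0, ∀ s, μH[finrank ℝ E] (φ '' s) = c * μ s := by
  obtain ⟨c, hc⟩ :=
    φ.linear.exists_hausdorffMeasure_image_eq_mul μ (φ.linear_injective_iff.2 hφ)
  refine ⟨c, fun s => ?_⟩
  rw [← hc, show ⇑φ = (· + φ 0) ∘ φ.linear from φ.decomp, image_comp]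
  exact (IsometryEquiv.addRight (φ 0)).hausdorffMeasure_image _ _

end AffineImage

theorem volume_refTri : volume refTri = 2⁻¹ := by
  set T : Set (ℝ × ℝ) := {q | q.1 ∈ Icc 0 1 ∧ q.2 ∈ Icc 0 (1 - q.1)}
  have hT : refTri = MeasurableEquiv.finTwoArrow ⁻¹' T := by
    ext p
    simp only [refTri, T, mem_preimage, mem_Icc, MeasurableEquiv.finTwoArrow_apply]
    constructor
    · rintro ⟨h0, h1, h2⟩
      exact ⟨⟨h0, by linarith⟩, h1, by linarith⟩
    · rintro ⟨⟨h0, -⟩, h1, h2⟩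
      exact ⟨h0, h1, by linarith⟩
  have hTm : MeasurableSet T :=
    measurableSet_region_between_cc measurable_const (measurable_const.sub measurable_id)
      measurableSet_Icc
  have hslice (x : ℝ) :
      volume (Prod.mk x ⁻¹' T) = (Icc 0 1).indicator (fun x => ENNReal.ofReal (1 - x)) x := by
    by_cases hx : x ∈ Icc (0 : ℝ) 1
    · rw [indicator_of_mem hx, ← sub_zero (1 - x), ← Real.volume_Icc]
      exact congrArg volume (ext fun y => and_iff_right hx)
    · rw [indicator_of_notMem hx, ← measure_empty (μ := (volume : Measure ℝ))]
      exact congrArg volume (ext fun y => iff_of_false (fun h => hx h.1) id)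
  have hint : ∫ x in Icc (0 : ℝ) 1, (1 - x) = 2⁻¹ := by
    rw [integral_Icc_eq_integral_Ioc, ← intervalIntegral.integral_of_le zero_le_one,
      intervalIntegral.integral_comp_sub_left (fun x => x)]
    norm_num
  rw [hT, (volume_preserving_finTwoArrow ℝ).measure_preimage_equiv, Measure.volume_eq_prod,
    Measure.prod_apply hTm, lintegral_congr hslice, lintegral_indicator measurableSet_Icc,
    ← ofReal_integral_eq_lintegral_ofReal, hint]
  · rw [ENNReal.ofReal_inv_of_pos two_pos, ENNReal.ofReal_ofNat]
  · exact (continuous_const.sub continuous_id).integrableOn_Icc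
  · exact (ae_restrict_iff' measurableSet_Icc).2 (.of_forall fun x hx => sub_nonneg.2 hx.2)

theorem refTri_eq_convexHull :
    refTri = convexHull ℝ {0, Pi.single 0 1, Pi.single 1 1} := by
  refine Subset.antisymm (fun p ⟨h0, h1, h2⟩ => ?_) (convexHull_min ?_ ?_)
  · have := (convex_convexHull ℝ ({0, Pi.single 0 1, Pi.single 1 1} : Set (Fin 2 → ℝ))).sum_mem
      (t := Finset.univ) (w := ![1 - p 0 - p 1, p 0, p 1])
      (z := ![0, Pi.single 0 1, Pi.single 1 1])
      (fun i _ => by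
        fin_cases i
        exacts [show 0 ≤ 1 - p 0 - p 1 by linarith, h0, h1])
      (by rw [Fin.sum_univ_three]; exact show 1 - p 0 - p 1 + p 0 + p 1 = 1 by ring)
      (fun i _ => subset_convexHull ℝ _ (by fin_cases i <;> simp))
    convert this using 1
    ext i
    fin_cases i <;> simp [Fin.sum_univ_three]
  · rintro p (rfl | rfl | rfl) <;> simp [refTri]
  · rintro p ⟨hp0, hp1, hp2⟩ q ⟨hq0, hq1, hq2⟩ a b ha hb hab
    refine ⟨?_, ?_, ?_⟩ <;> simp only [Pi.add_apply, Pi.smul_apply, smul_eq_mul] <;> nlinarith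

theorem isCompact_refTri : IsCompact refTri := by
  rw [refTri_eq_convexHull]
  exact (toFinite _).isCompact_convexHull (𝕜 := ℝ)

section RefTriangle

variable {F : Type*} [AddCommGroup F] [Module ℝ F]

def triangleMap (a b c : F) : (Fin 2 → ℝ) →ᵃ[ℝ] F :=
  (Fintype.linearCombination ℝ ![b - a, c - a]).toAffineMap + AffineMap.const ℝ _ a

theorem triangleMap_apply (a b c : F) (p : Fin 2 → ℝ) :
    triangleMap a b c p = p 0 • (b - a) + p 1 • (c - a) + a := by
  simp [triangleMap, Fintype.linearCombination_apply, Fin.sum_univ_two]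

theorem triangleMap_image_refTri (a b c : F) :
    triangleMap a b c '' refTri = convexHull ℝ {a, b, c} := by
  rw [refTri_eq_convexHull, AffineMap.image_convexHull]
  simp [image_insert_eq, triangleMap_apply]

end RefTriangle

section HausdorffRefTriangle

variable {F : Type*} [NormedAddCommGroup F] [NormedSpace ℝ F] [MeasurableSpace F] [BorelSpace F]
  (φ : (Fin 2 → ℝ) →ᵃ[ℝ] F) (hφ : Injective φ)
include hφ

theorem hausdorffMeasure_image_refTri_ne_top : μH[2] (φ '' refTri) ≠ ∞ := by
  obtain ⟨c, hc⟩ := φ.exists_hausdorffMeasure_image_eq_mul volume hφ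
  simp only [finrank_fin_fun, Nat.cast_ofNat] at hc
  rw [hc, volume_refTri]
  exact ENNReal.mul_ne_top ENNReal.coe_ne_top (by simp)

theorem hausdorffMeasure_image_eq_mul_volume (s : Set (Fin 2 → ℝ)) :
    μH[2] (φ '' s) = 2 * μH[2] (φ '' refTri) * volume s := by
  obtain ⟨c, hc⟩ := φ.exists_hausdorffMeasure_image_eq_mul volume hφ
  simp only [finrank_fin_fun, Nat.cast_ofNat] at hc
  rw [hc, hc, volume_refTri, mul_left_comm, ENNReal.mul_inv_cancel two_ne_zero ENNReal.ofNat_ne_top,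
    mul_one]

theorem setIntegral_image_refTri (g : F → ℝ) :
    ∫ x in φ '' refTri, g x ∂μH[2] =
      2 * (μH[2] (φ '' refTri)).toReal * ∫ p in refTri, g (φ p) := by
  have hemb := φ.measurableEmbedding_of_injective hφ
  rw [hemb.restrict_image_eq_smul_map (hausdorffMeasure_image_eq_mul_volume φ hφ),
    integral_smul_measure, hemb.integral_map, ENNReal.toReal_mul, smul_eq_mul]
  rfl

theorem integrableOn_image_refTri {g : F → ℝ} (hg : ContinuousOn g (φ '' refTri)) :
    IntegrableOn g (φ '' refTri) μH[2] := by
  have hemb := φ.measurableEmbedding_of_injective hφ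
  rw [IntegrableOn, hemb.restrict_image_eq_smul_map (hausdorffMeasure_image_eq_mul_volume φ hφ)]
  refine .smul_measure ?_ (ENNReal.mul_ne_top ENNReal.ofNat_ne_top
    (hausdorffMeasure_image_refTri_ne_top φ hφ))
  rw [hemb.integrable_map_iff]
  exact (hg.comp φ.continuous_of_finiteDimensional.continuousOn
    (mapsTo_image _ _)).integrableOn_compact isCompact_refTri

end HausdorffRefTriangle

local notation "ℝ³" => EuclideanSpace ℝ (Fin 3)

def refFaceParam : Fin 4 → (Fin 2 → ℝ) → ℝ³ :=
  ![fun p => WithLp.toLp 2 ![p 0, p 1, 0], fun p => WithLp.toLp 2 ![p 0, 0, p 1],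
    fun p => WithLp.toLp 2 ![0, p 0, p 1], fun p => WithLp.toLp 2 ![p 0, p 1, 1 - p 0 - p 1]]

theorem refFaceParam_injective (ℓ : Fin 4) : Injective (refFaceParam ℓ) := by
  intro p q h
  have h0 := congrArg (· 0) h
  have h1 := congrArg (· 1) h
  have h2 := congrArg (· 2) h
  ext i
  fin_cases ℓ <;> fin_cases i <;> simp_all [refFaceParam]

/-- The barycentric coordinate w.r.t. `K̂` of the vertex opposite to the `ℓ`-th face. -/
def refTetBary : Fin 4 → ℝ³ → ℝ :=
  ![fun x => x 2, fun x => x 1, fun x => x 0, fun x => 1 - x 0 - x 1 - x 2]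

theorem refTet_eq_iInter : refTet = ⋂ ℓ, {x | 0 ≤ refTetBary ℓ x} := by
  ext x
  simp only [refTet, refTetBary, mem_ofPred_eq, mem_iInter, Fin.forall_fin_succ, Fin.isValue,
    cons_val', cons_val_fin_one, cons_val_zero, cons_val_succ, sub_nonneg, forall_const]
  constructor <;> intro h <;> refine ⟨?_, ?_, ?_, ?_⟩ <;> linarith

theorem continuous_refTetBary (ℓ : Fin 4) : Continuous (refTetBary ℓ) := by
  fin_cases ℓ <;>
  · simp only [refTetBary, Fin.isValue, Fin.zero_eta, Fin.mk_one, Fin.reduceFinMk, cons_val_zero,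
      cons_val_one, cons_val]
    fun_prop

theorem exists_refTetBary_add_smul (ℓ : Fin 4) :
    ∃ u : ℝ³, ∀ x (t : ℝ), refTetBary ℓ (x + t • u) = refTetBary ℓ x + t := by
  fin_cases ℓ
  · exact ⟨EuclideanSpace.single 2 1, fun x t => by simp [refTetBary]⟩
  · exact ⟨EuclideanSpace.single 1 1, fun x t => by simp [refTetBary]⟩
  · exact ⟨EuclideanSpace.single 0 1, fun x t => by simp [refTetBary]⟩
  · exact ⟨-EuclideanSpace.single 0 1, fun x t => by
      simp [refTetBary, sub_eq_add_neg, add_assoc, add_comm, add_left_comm]⟩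

theorem image_refFaceParam_refTri (ℓ : Fin 4) :
    refFaceParam ℓ '' refTri = {x ∈ refTet | refTetBary ℓ x = 0} := by
  apply Subset.antisymm
  · rintro _ ⟨p, ⟨h0, h1, h2⟩, rfl⟩
    fin_cases ℓ <;>
    · simp only [refFaceParam, refTet, refTetBary, mem_ofPred_eq, Fin.isValue, Fin.zero_eta,
        Fin.mk_one, Fin.reduceFinMk, cons_val', cons_val_fin_one, cons_val_zero, cons_val_one,
        cons_val]
      refine ⟨⟨?_, ?_, ?_, ?_⟩, ?_⟩ <;> first | trivial | linarith
  · rintro x ⟨⟨h0, h1, h2, h3⟩, hx⟩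
    fin_cases ℓ <;> simp only [refTetBary, Fin.isValue, Fin.zero_eta, Fin.mk_one, Fin.reduceFinMk,
      cons_val', cons_val_fin_one, cons_val_zero, cons_val_one, cons_val] at hx
    · refine ⟨![x 0, x 1], ⟨h0, h1, (by linarith : x 0 + x 1 ≤ 1)⟩, ?_⟩
      ext i; fin_cases i <;> simp [refFaceParam, hx]
    · refine ⟨![x 0, x 2], ⟨h0, h2, (by linarith : x 0 + x 2 ≤ 1)⟩, ?_⟩
      ext i; fin_cases i <;> simp [refFaceParam, hx]
    · refine ⟨![x 1, x 2], ⟨h1, h2, (by linarith : x 1 + x 2 ≤ 1)⟩, ?_⟩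
      ext i; fin_cases i <;> simp [refFaceParam, hx]
    · refine ⟨![x 0, x 1], ⟨h0, h1, (by linarith : x 0 + x 1 ≤ 1)⟩, ?_⟩
      ext i; fin_cases i <;> simp [refFaceParam, show x 2 = 1 - x 0 - x 1 by linarith]

theorem frontier_refTet : frontier refTet = ⋃ ℓ, refFaceParam ℓ '' refTri := by
  have hclosed : IsClosed refTet := by
    rw [refTet_eq_iInter]
    exact isClosed_iInter fun ℓ => isClosed_le continuous_const (continuous_refTetBary ℓ)
  have hinterior : interior refTet = ⋂ ℓ, {x | 0 < refTetBary ℓ x} := by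
    rw [refTet_eq_iInter, interior_iInter_of_finite]
    refine iInter_congr fun ℓ => ?_
    obtain ⟨u, hu⟩ := exists_refTetBary_add_smul ℓ
    exact interior_setOf_nonneg (continuous_refTetBary ℓ) hu
  rw [hclosed.frontier_eq, hinterior]
  ext x
  simp only [image_refFaceParam_refTri, mem_sdiff, mem_iInter, mem_iUnion, mem_ofPred_eq,
    not_forall, not_lt]
  constructor
  · rintro ⟨hx, ℓ, hℓ⟩
    exact ⟨ℓ, hx, hℓ.antisymm (by rw [refTet_eq_iInter, mem_iInter] at hx; exact hx ℓ)⟩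
  · rintro ⟨ℓ, hx, hℓ⟩
    exact ⟨hx, ℓ, hℓ.le⟩

section Tetrahedron

variable (v : Fin 4 → ℝ³)

theorem FK_apply (x : ℝ³) (i : Fin 3) :
    FK v x i = x 0 * (v 1 i - v 0 i) + x 1 * (v 2 i - v 0 i) + x 2 * (v 3 i - v 0 i) + v 0 i := by
  simp only [FK, Bmat, PiLp.add_apply, ofLp_toLpLin, toLin'_apply, mulVec, dotProduct, of_apply,
    Fin.sum_univ_three, Fin.succ_zero_eq_one, Fin.succ_one_eq_two, Fin.reduceSucc]
  ring

theorem isHomeomorph_FK (hdet : (Bmat v).det ≠ 0) : IsHomeomorph (FK v) := by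
  have hinj : Injective (Matrix.toEuclideanLin (Bmat v)) := fun x y hxy =>
    WithLp.ofLp_injective 2 <| mulVec_injective_of_det_ne_zero hdet <| by
      simpa using congrArg WithLp.ofLp hxy
  exact ((LinearEquiv.ofInjectiveEndo _ hinj).toContinuousLinearEquiv.toHomeomorph.trans
    (Homeomorph.addRight (v 0))).isHomeomorph

theorem faceParam_eq_triangleMap (ℓ : Fin 4) :
    faceParam v ℓ =
      triangleMap (v (faceVerts ℓ 0)) (v (faceVerts ℓ 1)) (v (faceVerts ℓ 2)) := by
  funext p
  ext i
  fin_cases ℓ <;>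
  · simp only [faceParam, faceVerts, FK_apply, triangleMap_apply, PiLp.add_apply, PiLp.smul_apply,
      PiLp.sub_apply, smul_eq_mul, Fin.isValue, Fin.zero_eta, Fin.mk_one, Fin.reduceFinMk,
      cons_val', cons_val_fin_one, cons_val_zero, cons_val_one, cons_val]
    ring

theorem image_faceParam_refTri (ℓ : Fin 4) : faceParam v ℓ '' refTri = face v ℓ := by
  rw [faceParam_eq_triangleMap, triangleMap_image_refTri]
  rfl

theorem faceParam_eq_comp (ℓ : Fin 4) : faceParam v ℓ = FK v ∘ refFaceParam ℓ := by
  fin_cases ℓ <;> rfl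

theorem faceParam_injective (hdet : (Bmat v).det ≠ 0) (ℓ : Fin 4) :
    Injective (faceParam v ℓ) := by
  rw [faceParam_eq_comp]
  exact (isHomeomorph_FK v hdet).injective.comp (refFaceParam_injective ℓ)

theorem frontier_FK_image_refTet (hdet : (Bmat v).det ≠ 0) :
    frontier (FK v '' refTet) = ⋃ ℓ, face v ℓ := by
  rw [← (isHomeomorph_FK v hdet).image_frontier, frontier_refTet, image_iUnion]
  refine iUnion_congr fun ℓ => ?_
  rw [← image_faceParam_refTri, faceParam_eq_comp, image_comp]

def faceIdx (ℓ : Fin 4) : Finset (Fin 4) := {faceVerts ℓ 0, faceVerts ℓ 1, faceVerts ℓ 2}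

theorem face_eq_convexHull_image (ℓ : Fin 4) :
    face v ℓ = convexHull ℝ (v '' faceIdx ℓ) := by
  simp [face, faceIdx, image_insert_eq]

theorem hausdorffMeasure_face_inter (hv : AffineIndependent ℝ v) {ℓ ℓ' : Fin 4} (h : ℓ ≠ ℓ') :
    μH[2] (face v ℓ ∩ face v ℓ') = 0 := by
  obtain ⟨i, j, hij⟩ : ∃ i j, faceIdx ℓ ∩ faceIdx ℓ' = {i, j} := by
    revert ℓ ℓ'; decide
  rw [face_eq_convexHull_image, face_eq_convexHull_image, ← hv.convexHull_image_inter, hij]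
  simpa [image_insert_eq, convexHull_pair] using hausdorffMeasure_segment (v i) (v j) one_lt_two

theorem measurableSet_face (ℓ : Fin 4) : MeasurableSet (face v ℓ) :=
  ((toFinite _).isCompact_convexHull (𝕜 := ℝ)).isClosed.measurableSet

theorem setIntegral_face (hdet : (Bmat v).det ≠ 0) (ℓ : Fin 4) (g : ℝ³ → ℝ) :
    ∫ x in face v ℓ, g x ∂μH[2] =
      2 * (μH[2] (face v ℓ)).toReal * ∫ p in refTri, g (faceParam v ℓ p) := by
  have hinj := faceParam_injective v hdet ℓ
  rw [← image_faceParam_refTri, faceParam_eq_triangleMap] at *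
  exact setIntegral_image_refTri _ hinj g

theorem integrableOn_face (hdet : (Bmat v).det ≠ 0) (ℓ : Fin 4) {g : ℝ³ → ℝ}
    (hg : ContinuousOn g (face v ℓ)) : IntegrableOn g (face v ℓ) μH[2] := by
  have hinj := faceParam_injective v hdet ℓ
  rw [← image_faceParam_refTri, faceParam_eq_triangleMap] at *
  exact integrableOn_image_refTri _ hinj hg

end Tetrahedron

/-- For a positively oriented tetrahedron `K = F_K(K̂)` with affinely independent
vertices and any `ψ` continuous on `∂K`,
`∫_{∂K} ψ dμH² = Σ_{ℓ=1}^{4} 2|e_ℓ^K| ∫_{K̂₂} ψ(φ_ℓ^K(s,t)) ds dt`. -/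
theorem boundary_integral_tetrahedron (v : Fin 4 → EuclideanSpace ℝ (Fin 3))
    (hv : AffineIndependent ℝ v) (hdet : 0 < (Bmat v).det)
    (ψ : EuclideanSpace ℝ (Fin 3) → ℝ)
    (hψ : ContinuousOn ψ (frontier (FK v '' refTet))) :
    (∫ x in frontier (FK v '' refTet), ψ x ∂μH[2]) =
      ∑ ℓ : Fin 4, 2 * (μH[2] (face v ℓ)).toReal *
        ∫ p in refTri, ψ (faceParam v ℓ p) := by
  rw [frontier_FK_image_refTet v hdet.ne'] at hψ ⊢
  rw [integral_iUnion_ae (fun ℓ => (measurableSet_face v ℓ).nullMeasurableSet)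
      (fun ℓ ℓ' h => hausdorffMeasure_face_inter v hv h)
      (integrableOn_finite_iUnion.2 fun ℓ =>
        integrableOn_face v hdet.ne' ℓ (hψ.mono (subset_iUnion _ ℓ))),
    tsum_fintype]
  exact Finset.sum_congr rfl fun ℓ _ => setIntegral_face v hdet.ne' ℓ ψ
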